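/- Suppose m ≥ n, M ∈ R^{m×m} is nonsingular, σ_n(M A) > ‖M B‖₂, and A x* − B|x*| = b. Then for all x ∈ R^n, ‖x − x*‖₂ ≤ ‖M(A x − B|x| − b)‖₂ / (σ_n(M A) − ‖M B‖₂). -/

import Mathlib

open Matrix

/-- The `i`-th largest singular value of a real matrix (0-indexed),
defined as the `i`-th entry of the decreasingly sorted list of square roots
of the eigenvalues of `Aᴴ * A`; `0` if `i` is out of range. -/
noncomputable def sv {m n : ℕ} (A : Matrix (Fin m) (Fin n) ℝ) (i : ℕ) : ℝ :=
  ((List.ofFn fun j : Fin n =>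
      Real.sqrt ((Matrix.isHermitian_conjTranspose_mul_self A).eigenvalues j)).insertionSort
    (· ≥ ·)).getD i 0

/-- Euclidean norm of a vector. -/
noncomputable def vnorm {n : ℕ} (x : Fin n → ℝ) : ℝ := Real.sqrt (∑ i, x i ^ 2)

/-! Writing `MA(x - x*) - MB(|x| - |x*|)` for the scaled residual of `x`, the bound is a reverse
triangle inequality: `‖MA d‖ ≥ σₙ(MA) ‖d‖` and `‖MB e‖ ≤ σ₁(MB) ‖e‖`, where `e = |x| - |x*|`
satisfies `‖e‖ ≤ ‖d‖` since `||xᵢ| - |x*ᵢ|| ≤ |xᵢ - x*ᵢ|`. Both singular value estimates come from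
diagonalising `Aᵀ A = U Λ Uᵀ`, which gives `‖A x‖² = ∑ λⱼ yⱼ²` with `y = Uᵀ x`, `‖y‖ = ‖x‖`. -/

namespace List

variable {α : Type*} [LinearOrder α] {l : List α} {a : α}

theorem Pairwise.le_getD_zero (hl : l.Pairwise (· ≥ ·)) (ha : a ∈ l) (d : α) :
    a ≤ l.getD 0 d := by
  obtain ⟨i, rfl⟩ := get_of_mem ha
  rw [getD_eq_getElem _ _ i.pos]
  exact hl.rel_get_of_le (a := ⟨0, i.pos⟩) (Nat.zero_le _)

theorem Pairwise.getD_length_sub_one_le (hl : l.Pairwise (· ≥ ·)) (ha : a ∈ l) (d : α) :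
    l.getD (l.length - 1) d ≤ a := by
  obtain ⟨i, rfl⟩ := get_of_mem ha
  have hlast : l.length - 1 < l.length := Nat.sub_one_lt_of_lt i.pos
  rw [getD_eq_getElem _ _ hlast]
  exact hl.rel_get_of_le (b := ⟨_, hlast⟩) (Nat.le_sub_one_of_lt i.isLt)

end List

section EuclideanNorm

variable {n : ℕ}

theorem vnorm_nonneg (x : Fin n → ℝ) : 0 ≤ vnorm x := Real.sqrt_nonneg _

theorem vnorm_sq (x : Fin n → ℝ) : vnorm x ^ 2 = ∑ i, x i ^ 2 :=
  Real.sq_sqrt (Finset.sum_nonneg fun _ _ => sq_nonneg _)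

theorem vnorm_eq_sqrt_dotProduct (x : Fin n → ℝ) : vnorm x = Real.sqrt (x ⬝ᵥ x) := by
  simp only [vnorm, dotProduct, sq]

theorem vnorm_eq_norm_toLp (x : Fin n → ℝ) : vnorm x = ‖WithLp.toLp 2 x‖ := by
  simp [vnorm, EuclideanSpace.norm_eq]

theorem vnorm_sub_vnorm_le (u v : Fin n → ℝ) : vnorm u - vnorm v ≤ vnorm (u - v) := by
  simpa only [vnorm_eq_norm_toLp, WithLp.toLp_sub] using norm_sub_norm_le _ _

theorem vnorm_le_vnorm_of_abs_le {u v : Fin n → ℝ} (h : ∀ i, |u i| ≤ |v i|) :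
    vnorm u ≤ vnorm v :=
  Real.sqrt_le_sqrt (Finset.sum_le_sum fun i _ => sq_le_sq.2 (h i))

end EuclideanNorm

theorem Matrix.dotProduct_transpose_mul_self_mulVec {m n : ℕ} (A : Matrix (Fin m) (Fin n) ℝ)
    (x : Fin n → ℝ) : x ⬝ᵥ (Aᵀ * A) *ᵥ x = A *ᵥ x ⬝ᵥ A *ᵥ x := by
  rw [← mulVec_mulVec, dotProduct_mulVec, vecMul_transpose]

section SingularValues

variable {m n : ℕ} (A : Matrix (Fin m) (Fin n) ℝ)

local notation "λ[" A "]" => IsHermitian.eigenvalues (isHermitian_conjTranspose_mul_self A)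

theorem exists_vnorm_eq_and_vnorm_mulVec_sq_eq_sum_eigenvalues (x : Fin n → ℝ) :
    ∃ y : Fin n → ℝ, vnorm y = vnorm x ∧ vnorm (A *ᵥ x) ^ 2 = ∑ j, λ[A] j * y j ^ 2 := by
  set hA := isHermitian_conjTranspose_mul_self A
  set U : Matrix (Fin n) (Fin n) ℝ := (hA.eigenvectorUnitary : Matrix (Fin n) (Fin n) ℝ)
  have hUUt : U * Uᵀ = 1 := mem_unitaryGroup_iff.mp hA.eigenvectorUnitary.2
  have hspec : Aᵀ * A = U * diagonal (λ[A]) * Uᵀ := by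
    have := hA.spectral_theorem
    simp only [RCLike.ofReal_real_eq_id, Function.id_comp] at this
    exact this
  have hvecMul : x ᵥ* U = Uᵀ *ᵥ x := by simpa using vecMul_transpose Uᵀ x
  refine ⟨Uᵀ *ᵥ x, ?_, ?_⟩
  · rw [vnorm_eq_sqrt_dotProduct, vnorm_eq_sqrt_dotProduct,
      ← dotProduct_transpose_mul_self_mulVec, transpose_transpose, hUUt, one_mulVec]
  · have hnonneg : 0 ≤ A *ᵥ x ⬝ᵥ A *ᵥ x := Finset.sum_nonneg fun _ _ => mul_self_nonneg _
    rw [vnorm_eq_sqrt_dotProduct, Real.sq_sqrt hnonneg,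
      ← dotProduct_transpose_mul_self_mulVec, hspec, ← mulVec_mulVec, ← mulVec_mulVec,
      dotProduct_mulVec, hvecMul]
    simp only [dotProduct, mulVec_diagonal]
    exact Finset.sum_congr rfl fun j _ => by ring

theorem sv_nonneg (i : ℕ) : 0 ≤ sv A i := by
  rw [sv, List.getD_eq_getElem?_getD]
  rcases h : (List.insertionSort _ _)[i]? with _ | s
  · exact le_rfl
  · obtain ⟨j, rfl⟩ := List.mem_ofFn.1 ((List.mem_insertionSort _).1 (List.mem_of_getElem? h))
    exact Real.sqrt_nonneg _

theorem sqrt_eigenvalues_le_sv_zero (j : Fin n) : Real.sqrt (λ[A] j) ≤ sv A 0 :=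
  (List.pairwise_insertionSort (· ≥ ·) (List.ofFn fun j => Real.sqrt (λ[A] j))).le_getD_zero
    ((List.mem_insertionSort _).2 (List.mem_ofFn.2 ⟨j, rfl⟩)) 0

theorem sv_sub_one_le_sqrt_eigenvalues (j : Fin n) : sv A (n - 1) ≤ Real.sqrt (λ[A] j) := by
  have h := (List.pairwise_insertionSort (· ≥ ·) (List.ofFn fun j => Real.sqrt (λ[A] j)))
    |>.getD_length_sub_one_le ((List.mem_insertionSort _).2 (List.mem_ofFn.2 ⟨j, rfl⟩)) 0
  rwa [List.length_insertionSort, List.length_ofFn] at h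

theorem vnorm_mulVec_le_sv_zero_mul (x : Fin n → ℝ) : vnorm (A *ᵥ x) ≤ sv A 0 * vnorm x := by
  obtain ⟨y, hyx, hAx⟩ := exists_vnorm_eq_and_vnorm_mulVec_sq_eq_sum_eigenvalues A x
  refine (pow_le_pow_iff_left₀ (vnorm_nonneg _)
    (mul_nonneg (sv_nonneg A 0) (vnorm_nonneg x)) two_ne_zero).1 ?_
  rw [hAx, mul_pow, ← hyx, vnorm_sq, Finset.mul_sum]
  gcongr with j
  exact (Real.sqrt_le_left (sv_nonneg A 0)).1 (sqrt_eigenvalues_le_sv_zero A j)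

theorem sv_sub_one_mul_le_vnorm_mulVec (x : Fin n → ℝ) :
    sv A (n - 1) * vnorm x ≤ vnorm (A *ᵥ x) := by
  obtain ⟨y, hyx, hAx⟩ := exists_vnorm_eq_and_vnorm_mulVec_sq_eq_sum_eigenvalues A x
  refine (pow_le_pow_iff_left₀ (mul_nonneg (sv_nonneg A _) (vnorm_nonneg x))
    (vnorm_nonneg _) two_ne_zero).1 ?_
  rw [hAx, mul_pow, ← hyx, vnorm_sq, Finset.mul_sum]
  gcongr with j
  exact (Real.le_sqrt (sv_nonneg A _) ((posSemidef_conjTranspose_mul_self A).eigenvalues_nonneg j)).1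
    (sv_sub_one_le_sqrt_eigenvalues A j)

end SingularValues

theorem sv_sub_mul_vnorm_le_vnorm_mulVec_sub {m n : ℕ} (P Q : Matrix (Fin m) (Fin n) ℝ)
    {d e : Fin n → ℝ} (hed : vnorm e ≤ vnorm d) :
    (sv P (n - 1) - sv Q 0) * vnorm d ≤ vnorm (P *ᵥ d - Q *ᵥ e) :=
  calc (sv P (n - 1) - sv Q 0) * vnorm d ≤ sv P (n - 1) * vnorm d - sv Q 0 * vnorm e := by
        linarith [mul_le_mul_of_nonneg_left hed (sv_nonneg Q 0)]
    _ ≤ vnorm (P *ᵥ d) - vnorm (Q *ᵥ e) := by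
        linarith [sv_sub_one_mul_le_vnorm_mulVec P d, vnorm_mulVec_le_sv_zero_mul Q e]
    _ ≤ vnorm (P *ᵥ d - Q *ᵥ e) := vnorm_sub_vnorm_le _ _

theorem gave_error_bound_sv_general {m n : ℕ} (A B : Matrix (Fin m) (Fin n) ℝ)
    (M : Matrix (Fin m) (Fin m) ℝ)
    (h : sv (M * A) (n - 1) > sv (M * B) 0) (b : Fin m → ℝ) (xs : Fin n → ℝ)
    (hxs : A.mulVec xs - B.mulVec (fun j => |xs j|) = b) :
    ∀ x : Fin n → ℝ, vnorm (x - xs) ≤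
      vnorm (M.mulVec (A.mulVec x - B.mulVec (fun j => |x j|) - b)) /
        (sv (M * A) (n - 1) - sv (M * B) 0) := by
  intro x
  have hresidual : M *ᵥ (A *ᵥ x - B *ᵥ (fun j => |x j|) - b) =
      (M * A) *ᵥ (x - xs) - (M * B) *ᵥ ((fun j => |x j|) - fun j => |xs j|) := by
    rw [← hxs]
    simp only [mulVec_sub, ← mulVec_mulVec]
    abel
  have habs : vnorm ((fun j => |x j|) - fun j => |xs j|) ≤ vnorm (x - xs) :=
    vnorm_le_vnorm_of_abs_le fun i => abs_abs_sub_abs_le_abs_sub (x i) (xs i)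
  rw [le_div_iff₀ (sub_pos.2 h), mul_comm, hresidual]
  exact sv_sub_mul_vnorm_le_vnorm_mulVec_sub _ _ habs

/-- Error bound: if `m ≥ n`, `M` is nonsingular, `σ_n(M A) > ‖M B‖₂`, and `x*` solves the
GAVE, then `‖x − x*‖₂ ≤ ‖M(A x − B|x| − b)‖₂ / (σ_n(M A) − ‖M B‖₂)` for all `x`. -/
theorem gave_error_bound_sv {m n : ℕ} (hmn : n ≤ m) (A B : Matrix (Fin m) (Fin n) ℝ)
    (M : Matrix (Fin m) (Fin m) ℝ) (hM : IsUnit M)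
    (h : sv (M * A) (n - 1) > sv (M * B) 0) (b : Fin m → ℝ) (xs : Fin n → ℝ)
    (hxs : A.mulVec xs - B.mulVec (fun j => |xs j|) = b) :
    ∀ x : Fin n → ℝ, vnorm (x - xs) ≤
      vnorm (M.mulVec (A.mulVec x - B.mulVec (fun j => |x j|) - b)) /
        (sv (M * A) (n - 1) - sv (M * B) 0) :=
  gave_error_bound_sv_general A B M h b xs hxs
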